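/- arXiv:2109.15145 — 2 statements merged into one kernel-verified Lean document; each statement's English description precedes it below -/
import Mathlib

section
/- For every real number x > 5 and all positive integers a and b, the polynomials Pₙ satisfy P_a(x) · P_b(x) > P_{a+b}(x). -/
/-- `σ₂(n) = ∑_{d ∣ n} d²`, the sum of the squares of the divisors of `n`. -/
def sigma2 (n : ℕ) : ℕ := ∑ d ∈ n.divisors, d ^ 2

/-- The polynomials `Pₙ`, defined by `P 0 = 1` and
`Pₙ(x) = (x/n) ∑_{k=1}^{n} σ₂(k) · P_{n−k}(x)` for `n ≥ 1`.
They satisfy `Pₙ(1) = pp(n)`, the number of plane partitions of `n`. -/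
noncomputable def P : ℕ → Polynomial ℝ
  | 0 => 1
  | n + 1 => Polynomial.C (((n : ℝ) + 1)⁻¹) * Polynomial.X *
      ∑ k ∈ Finset.range (n + 1), Polynomial.C ((sigma2 (k + 1) : ℝ)) * P (n - k)


/-!
Multiplying the recurrence by `n` gives `n Pₙ(x) = x ∑_{k=0}^{n} σ₂(k) P_{n−k}(x)` (with
`σ₂(0) = 0`). Split this sum for `n = a + b` at `k = b`. For `k ≤ b` the terms
`σ₂(k) P_{a+b−k}` are bounded by `P_a · σ₂(k) P_{b−k}` by induction on `b`; for `k = b + j`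
with `j ≥ 1` the terms `σ₂(b+j) P_{a−j}` are strictly bounded by `P_b · σ₂(j) P_{a−j}`, because
`σ₂(b+j) ≤ 2 (b+j)² < x b² j² ≤ σ₂(j) P_b(x)` (using `σ₂(m) ≤ ζ(2) m² ≤ 2 m²` and
`P_b(x) ≥ x b²`). Summing and using the recurrence for `a` and `b` gives
`(a+b) P_{a+b} < b P_a P_b + a P_b P_a`.
-/

open Polynomial Finset

lemma sum_range_add_sub_split {M : Type*} [AddCommMonoid M] (f : ℕ → ℕ → M) (a b : ℕ) :
    ∑ k ∈ range (a + b + 1), f k (a + b - k) =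
      ∑ k ∈ range (b + 1), f k (a + (b - k)) + ∑ j ∈ range a, f (b + (j + 1)) (a - (j + 1)) := by
  rw [show a + b + 1 = b + 1 + a by omega, sum_range_add]
  congr 1
  · refine sum_congr rfl fun k hk => ?_
    rw [show a + b - k = a + (b - k) by simp at hk; omega]
  · refine sum_congr rfl fun j _ => ?_
    rw [show b + 1 + j = b + (j + 1) by omega, show a + b - (b + (j + 1)) = a - (j + 1) by omega]

lemma sigma2_zero : sigma2 0 = 0 := rfl

lemma sq_le_sigma2 (n : ℕ) : n ^ 2 ≤ sigma2 n := by
  rcases n.eq_zero_or_pos with rfl | hn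
  · simp
  · exact single_le_sum (f := fun d => d ^ 2) (fun _ _ => Nat.zero_le _)
      (Nat.mem_divisors_self n hn.ne')

lemma sigma2_le_two_mul_sq (n : ℕ) : sigma2 n ≤ 2 * n ^ 2 := by
  rcases n.eq_zero_or_pos with rfl | hn
  · simp [sigma2_zero]
  have hsum : ∑ d ∈ n.divisors, ((d : ℝ) ^ 2)⁻¹ ≤ 2 :=
    calc ∑ d ∈ n.divisors, ((d : ℝ) ^ 2)⁻¹ ≤ ∑ d ∈ Ioo 0 (n + 1), ((d : ℝ) ^ 2)⁻¹ := by
          refine sum_le_sum_of_subset_of_nonneg (fun d hd => ?_) (fun _ _ _ => by positivity)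
          have := Nat.divisor_le hd
          simp only [mem_Ioo]
          exact ⟨Nat.pos_of_mem_divisors hd, by omega⟩
      _ ≤ 2 / ((0 : ℕ) + 1) := sum_Ioo_inv_sq_le 0 (n + 1)
      _ = 2 := by norm_num
  have hσ : (sigma2 n : ℝ) = n ^ 2 * ∑ d ∈ n.divisors, ((d : ℝ) ^ 2)⁻¹ := by
    rw [sigma2, ← Nat.sum_div_divisors, mul_sum]
    push_cast
    refine sum_congr rfl fun d hd => ?_
    have hd0 : (d : ℝ) ≠ 0 := by exact_mod_cast (Nat.pos_of_mem_divisors hd).ne'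
    rw [Nat.cast_div (Nat.dvd_of_mem_divisors hd) hd0]
    field_simp
  have : (sigma2 n : ℝ) ≤ 2 * n ^ 2 := by
    rw [hσ, mul_comm 2]
    exact mul_le_mul_of_nonneg_left hsum (by positivity)
  exact_mod_cast this

lemma natCast_mul_eval_P (x : ℝ) (n : ℕ) :
    n * (P n).eval x = x * ∑ k ∈ range (n + 1), (sigma2 k : ℝ) * (P (n - k)).eval x := by
  cases n with
  | zero => simp [sigma2_zero]
  | succ n =>
    rw [sum_range_succ', P]
    simp [eval_finsetSum, sigma2_zero]
    field_simp

section LowerBounds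

variable {x : ℝ}

lemma mul_sq_le_eval_P_of_forall (hx : 0 ≤ x) {n : ℕ}
    (h : ∀ m < n, ((m : ℝ) + 1) ^ 2 ≤ (P m).eval x) : x * n ^ 2 ≤ (P n).eval x := by
  rcases n.eq_zero_or_pos with rfl | hn
  · simp [P]
  have hterm : ∀ k ∈ range n, (n : ℝ) ^ 2 ≤ sigma2 (k + 1) * (P (n - (k + 1))).eval x := by
    intro k hk
    obtain ⟨m, rfl⟩ : ∃ m, n = k + 1 + m := ⟨n - (k + 1), by simp at hk; omega⟩
    have hσ : ((k : ℝ) + 1) ^ 2 ≤ sigma2 (k + 1) := by exact_mod_cast sq_le_sigma2 (k + 1)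
    have hP : ((m : ℝ) + 1) ^ 2 ≤ (P m).eval x := h m (by omega)
    rw [Nat.add_sub_cancel_left]
    push_cast
    calc ((k : ℝ) + 1 + m) ^ 2 ≤ (((k : ℝ) + 1) * (m + 1)) ^ 2 := by gcongr; nlinarith
      _ = ((k : ℝ) + 1) ^ 2 * (m + 1) ^ 2 := by ring
      _ ≤ sigma2 (k + 1) * (P m).eval x := by gcongr
  have hsum : (n : ℝ) * n ^ 2 ≤ ∑ k ∈ range (n + 1), (sigma2 k : ℝ) * (P (n - k)).eval x := by
    rw [sum_range_succ', sigma2_zero, Nat.cast_zero, zero_mul, add_zero]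
    simpa using sum_le_sum hterm
  have : (n : ℝ) * (x * n ^ 2) ≤ n * (P n).eval x := by
    rw [natCast_mul_eval_P, mul_left_comm]
    exact mul_le_mul_of_nonneg_left hsum hx
  exact le_of_mul_le_mul_left this (by exact_mod_cast hn)

lemma sq_le_eval_P (hx : 4 ≤ x) (n : ℕ) : ((n : ℝ) + 1) ^ 2 ≤ (P n).eval x := by
  induction n using Nat.strong_induction_on with
  | _ n ih =>
    rcases n with _ | n
    · simp [P]
    · have hn : (0 : ℝ) ≤ n := n.cast_nonneg
      calc ((n + 1 : ℕ) + 1 : ℝ) ^ 2 ≤ 4 * ((n + 1 : ℕ) : ℝ) ^ 2 := by push_cast; nlinarith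
        _ ≤ x * ((n + 1 : ℕ) : ℝ) ^ 2 := by gcongr
        _ ≤ (P (n + 1)).eval x := mul_sq_le_eval_P_of_forall (by linarith) ih

lemma mul_sq_le_eval_P (hx : 4 ≤ x) (n : ℕ) : x * n ^ 2 ≤ (P n).eval x :=
  mul_sq_le_eval_P_of_forall (by linarith) fun m _ => sq_le_eval_P hx m

lemma eval_P_pos (hx : 4 ≤ x) (n : ℕ) : 0 < (P n).eval x :=
  lt_of_lt_of_le (by positivity) (sq_le_eval_P hx n)

end LowerBounds

section Submultiplicativity

variable {x : ℝ}

lemma sigma2_add_lt_sigma2_mul_eval_P (hx : 5 < x) {b j : ℕ} (hb : 0 < b) (hj : 0 < j) :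
    (sigma2 (b + j) : ℝ) < sigma2 j * (P b).eval x := by
  have hbj : (0 : ℝ) < (b * j) ^ 2 := by positivity
  have hlt : (sigma2 (b + j) : ℝ) < x * (b * j) ^ 2 := by
    by_cases h11 : b = 1 ∧ j = 1
    · obtain ⟨rfl, rfl⟩ := h11
      norm_num [show sigma2 2 = 5 by decide, hx]
    · have h : 2 * (b + j) ^ 2 ≤ 5 * (b * j) ^ 2 := by
        have h3 : 3 ≤ b + j := by omega
        have hprod : b + j ≤ b * j + 1 := by nlinarith
        have hlin : 2 * (b + j) ≤ 3 * (b * j) := by linarith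
        nlinarith [Nat.mul_le_mul hlin hlin]
      have hσ : sigma2 (b + j) ≤ 5 * (b * j) ^ 2 := (sigma2_le_two_mul_sq _).trans h
      calc (sigma2 (b + j) : ℝ) ≤ 5 * (b * j) ^ 2 := by exact_mod_cast hσ
        _ < x * (b * j) ^ 2 := by gcongr
  calc (sigma2 (b + j) : ℝ) < x * (b * j) ^ 2 := hlt
    _ = j ^ 2 * (x * b ^ 2) := by ring
    _ ≤ sigma2 j * (P b).eval x := by
        gcongr
        · exact_mod_cast sq_le_sigma2 j
        · exact mul_sq_le_eval_P (by linarith) b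

lemma sum_sigma2_add_mul_eval_P_lt (hx : 5 < x) {a b : ℕ} (ha : 0 < a) (hb : 0 < b) :
    ∑ j ∈ range a, (sigma2 (b + (j + 1)) : ℝ) * (P (a - (j + 1))).eval x <
      (P b).eval x * ∑ j ∈ range (a + 1), (sigma2 j : ℝ) * (P (a - j)).eval x := by
  rw [sum_range_succ', sigma2_zero, Nat.cast_zero, zero_mul, add_zero, mul_sum]
  refine sum_lt_sum_of_nonempty (nonempty_range_iff.mpr ha.ne') fun j _ => ?_
  calc (sigma2 (b + (j + 1)) : ℝ) * (P (a - (j + 1))).eval x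
      < (sigma2 (j + 1) * (P b).eval x) * (P (a - (j + 1))).eval x := by
        gcongr
        · exact eval_P_pos (by linarith) _
        · exact sigma2_add_lt_sigma2_mul_eval_P hx hb j.succ_pos
    _ = (P b).eval x * (sigma2 (j + 1) * (P (a - (j + 1))).eval x) := by ring

lemma eval_P_add_lt_of_forall (hx : 5 < x) {a b : ℕ} (ha : 0 < a) (hb : 0 < b)
    (h : ∀ m < b, (P (a + m)).eval x ≤ (P a).eval x * (P m).eval x) :
    (P (a + b)).eval x < (P a).eval x * (P b).eval x := by
  have hle : ∑ k ∈ range (b + 1), (sigma2 k : ℝ) * (P (a + (b - k))).eval x ≤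
      (P a).eval x * ∑ k ∈ range (b + 1), (sigma2 k : ℝ) * (P (b - k)).eval x := by
    rw [mul_sum]
    refine sum_le_sum fun k _ => ?_
    rcases k.eq_zero_or_pos with rfl | hk
    · simp [sigma2_zero]
    · calc (sigma2 k : ℝ) * (P (a + (b - k))).eval x
          ≤ sigma2 k * ((P a).eval x * (P (b - k)).eval x) := by gcongr; exact h _ (by omega)
        _ = (P a).eval x * (sigma2 k * (P (b - k)).eval x) := by ring
  have hlt := sum_sigma2_add_mul_eval_P_lt hx ha hb
  have hab := natCast_mul_eval_P x (a + b)
  rw [sum_range_add_sub_split (fun i j => (sigma2 i : ℝ) * (P j).eval x)] at hab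
  have : ((a + b : ℕ) : ℝ) * (P (a + b)).eval x <
      ((a + b : ℕ) : ℝ) * ((P a).eval x * (P b).eval x) :=
    calc ((a + b : ℕ) : ℝ) * (P (a + b)).eval x
        < x * ((P a).eval x * ∑ k ∈ range (b + 1), (sigma2 k : ℝ) * (P (b - k)).eval x +
            (P b).eval x * ∑ j ∈ range (a + 1), (sigma2 j : ℝ) * (P (a - j)).eval x) := by
          rw [hab]
          exact mul_lt_mul_of_pos_left (add_lt_add_of_le_of_lt hle hlt) (by linarith)
      _ = ((a + b : ℕ) : ℝ) * ((P a).eval x * (P b).eval x) := by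
          rw [mul_add, mul_left_comm, ← natCast_mul_eval_P, mul_left_comm x,
            ← natCast_mul_eval_P]
          push_cast; ring
  exact lt_of_mul_lt_mul_left this (by positivity)

end Submultiplicativity

/-- For every real `x > 5` and all positive integers `a, b`:
`P a` and `P b` evaluated at `x` multiply to more than `P (a+b)` at `x`. -/
theorem P_bessenrodt_ono_gt_five (x : ℝ) (hx : x > 5) (a b : ℕ) (ha : 0 < a) (hb : 0 < b) :
    (P a).eval x * (P b).eval x > (P (a + b)).eval x := by
  induction b using Nat.strong_induction_on with
  | _ b ih =>
    refine eval_P_add_lt_of_forall hx ha hb fun m hm => ?_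
    rcases m.eq_zero_or_pos with rfl | hm0
    · simp [P]
    · exact (ih m hm hm0).le
end

section
/- For every integer n ≥ 1 and every real number x ≥ 1, one has P_{n+1}(x) > Pₙ(x). -/
noncomputable def a (x : ℝ) (n : ℕ) : ℝ := (P n).eval x

lemma a_zero (x : ℝ) : a x 0 = 1 := by simp [a, P]

lemma rec1 (x : ℝ) (n : ℕ) :
    ((n : ℝ) + 1) * a x (n + 1)
      = x * ∑ k ∈ Finset.range (n + 1), (sigma2 (k + 1) : ℝ) * a x (n - k) := by
  have hne : ((n : ℝ) + 1) ≠ 0 := by positivity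
  have h : a x (n + 1)
      = ((n : ℝ) + 1)⁻¹ * x * ∑ k ∈ Finset.range (n + 1), (sigma2 (k + 1) : ℝ) * a x (n - k) := by
    simp [a, P, Polynomial.eval_finset_sum]
  rw [h]
  field_simp

noncomputable def c (x : ℝ) : ℕ → ℝ
  | 0 => 1
  | n + 1 => a x (n + 1) - a x n

lemma telescope (x : ℝ) (n : ℕ) : ∑ j ∈ Finset.range (n + 1), c x j = a x n := by
  induction n with
  | zero => simp [c, a_zero]
  | succ m ih => rw [Finset.sum_range_succ, ih]; simp [c]

lemma hsplit (x : ℝ) (m : ℕ) :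
    ∑ k ∈ Finset.range (m + 2), (sigma2 (k + 1) : ℝ) * c x (m + 1 - k)
      = (∑ k ∈ Finset.range (m + 2), (sigma2 (k + 1) : ℝ) * a x (m + 1 - k))
        - ∑ k ∈ Finset.range (m + 1), (sigma2 (k + 1) : ℝ) * a x (m - k) := by
  rw [Finset.sum_range_succ, Finset.sum_range_succ
    (fun k => (sigma2 (k + 1) : ℝ) * a x (m + 1 - k))]
  have hcong : ∀ k ∈ Finset.range (m + 1),
      (sigma2 (k + 1) : ℝ) * c x (m + 1 - k)
        = (sigma2 (k + 1) : ℝ) * a x (m + 1 - k) - (sigma2 (k + 1) : ℝ) * a x (m - k) := by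
    intro k hk
    have hk' : k ≤ m := Nat.lt_succ_iff.mp (Finset.mem_range.mp hk)
    have h1 : m + 1 - k = (m - k) + 1 := by omega
    rw [h1]
    simp [c]
    ring
  rw [Finset.sum_congr rfl hcong, Finset.sum_sub_distrib]
  simp [c, a_zero]
  ring

lemma crec (x : ℝ) (m : ℕ) :
    ((m : ℝ) + 2) * c x (m + 2)
      = ∑ k ∈ Finset.range (m + 2), (x * (sigma2 (k + 1) : ℝ) - 1) * c x (m + 1 - k) := by
  have h1 := rec1 x (m + 1)
  have h2 := rec1 x m
  push_cast at h1
  have hs := hsplit x m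
  have h4 : ∑ k ∈ Finset.range (m + 2), c x (m + 1 - k) = a x (m + 1) := by
    have := Finset.sum_range_reflect (fun j => c x j) (m + 2)
    simpa [telescope] using this
  have key : ∑ k ∈ Finset.range (m + 2), (x * (sigma2 (k + 1) : ℝ) - 1) * c x (m + 1 - k)
      = x * (∑ k ∈ Finset.range (m + 2), (sigma2 (k + 1) : ℝ) * c x (m + 1 - k))
        - ∑ k ∈ Finset.range (m + 2), c x (m + 1 - k) := by
    rw [Finset.mul_sum, ← Finset.sum_sub_distrib]
    exact Finset.sum_congr rfl (fun k _ => by ring)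
  rw [key, hs, h4]
  have hc : c x (m + 2) = a x (m + 2) - a x (m + 1) := rfl
  rw [hc]
  linarith [h1, h2]

lemma sigma2_ge (n : ℕ) (hn : 1 ≤ n) : n ^ 2 ≤ sigma2 n := by
  have hmem : n ∈ n.divisors := Nat.mem_divisors_self n (by omega)
  exact Finset.single_le_sum (f := fun d => d ^ 2) (fun i _ => Nat.zero_le _) hmem

lemma coeff_nonneg {x : ℝ} (hx : 1 ≤ x) (k : ℕ) : 0 ≤ x * (sigma2 (k + 1) : ℝ) - 1 := by
  have h1 : 1 ≤ sigma2 (k + 1) := le_trans (Nat.one_le_pow _ _ (by omega)) (sigma2_ge (k + 1) (by omega))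
  have h1' : (1 : ℝ) ≤ (sigma2 (k + 1) : ℝ) := by exact_mod_cast h1
  nlinarith

lemma c_nonneg (x : ℝ) (hx : 1 ≤ x) : ∀ n, 0 ≤ c x n := by
  intro n
  induction n using Nat.strong_induction_on with
  | _ n ih =>
    match n with
    | 0 => norm_num [c]
    | 1 =>
      have : c x 1 = x - 1 := by
        simp [c, a, P, a_zero, sigma2]
      rw [this]; linarith
    | m + 2 =>
      have h := crec x m
      have hpos : (0 : ℝ) < (m : ℝ) + 2 := by positivity
      have hsum : 0 ≤ ∑ k ∈ Finset.range (m + 2), (x * (sigma2 (k + 1) : ℝ) - 1) * c x (m + 1 - k) :=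
        Finset.sum_nonneg fun k _ => mul_nonneg (coeff_nonneg hx k) (ih (m + 1 - k) (by omega))
      nlinarith [h, hsum, hpos]

lemma c_pos (x : ℝ) (hx : 1 ≤ x) (m : ℕ) : 0 < c x (m + 2) := by
  have h := crec x m
  rw [Finset.sum_range_succ] at h
  have hzero : m + 1 - (m + 1) = 0 := by omega
  rw [hzero] at h
  have hc0 : c x 0 = 1 := rfl
  rw [hc0, mul_one] at h
  have hsum : 0 ≤ ∑ k ∈ Finset.range (m + 1), (x * (sigma2 (k + 1) : ℝ) - 1) * c x (m + 1 - k) :=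
    Finset.sum_nonneg fun k _ => mul_nonneg (coeff_nonneg hx k) (c_nonneg x hx _)
  have h2 : 2 ≤ sigma2 (m + 2) := by
    have h := sigma2_ge (m + 2) (by omega)
    have h4 : 4 ≤ (m + 2) ^ 2 := by
      calc 4 = 2 ^ 2 := by norm_num
        _ ≤ (m + 2) ^ 2 := Nat.pow_le_pow_left (by omega) 2
    omega
  have h2' : (2 : ℝ) ≤ (sigma2 (m + 2) : ℝ) := by exact_mod_cast h2
  have hpos : (0 : ℝ) < (m : ℝ) + 2 := by positivity
  nlinarith

/-- For every `n ≥ 1` and real `x ≥ 1`: `P (n+1)` exceeds `P n` at `x`. -/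
theorem P_strict_mono (n : ℕ) (hn : 1 ≤ n) (x : ℝ) (hx : 1 ≤ x) :
    (P (n + 1)).eval x > (P n).eval x := by
  obtain ⟨m, rfl⟩ : ∃ m, n = m + 1 := ⟨n - 1, by omega⟩
  have h := c_pos x hx m
  have hc : c x (m + 2) = (P (m + 2)).eval x - (P (m + 1)).eval x := rfl
  rw [hc] at h
  linarith
end
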